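/- Fix an integer m ≥ 1, reals c ∈ (0, 1/2), c_expl ∈ (0, 1], μ₁, μ₂ ∈ (c, 1−c) with μ₂ ≥ μ₁ + c, and a coordinatewise non-decreasing f : {0,1}^m → [0, m] with f(0,…,0) = 0 < f(1,…,1). Set c′ = c^{2m}·(f(1,…,1) − f(0,…,0)). If c_expl ≤ c′/(2m), then V(π₂) − sup_{π ∈ Π_bad} V(π) ≥ c′/2, where V(π) is the expected score f(rewards) minus c_expl times the number of non-skip pulls of the m-round policy π (pulls of arm i yield i.i.d. Bernoulli(μᵢ) rewards, skips yield reward 0 at no cost), π₂ always plays arm 2, and Π_bad is the set of policies never playing arm 2. -/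

import Mathlib

open MeasureTheory

/-- An action within an episode: pull arm 1, pull arm 2, or skip the round. -/
inductive EpAct : Type
  | arm1 : EpAct
  | arm2 : EpAct
  | skip : EpAct
deriving DecidableEq

/-- A per-episode policy maps the list of rewards observed so far (its length
encodes the current round) to the next action. -/
abbrev EpPolicy : Type := List Bool → EpAct

/-- Reward history after `t` rounds when running policy `π` against reward
tapes `ω₁ ω₂` (the round-`t` reward of arm `i` is `ωᵢ t`; skipping yields
reward `false`). -/
def epHist (π : EpPolicy) (ω₁ ω₂ : ℕ → Bool) : ℕ → List Bool
  | 0 => []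
  | t + 1 =>
      let h := epHist π ω₁ ω₂ t
      h ++ [match π h with
            | EpAct.arm1 => ω₁ t
            | EpAct.arm2 => ω₂ t
            | EpAct.skip => false]

/-- Number of non-skip pulls made by policy `π` during an `m`-round episode. -/
def epPulls (m : ℕ) (π : EpPolicy) (ω₁ ω₂ : ℕ → Bool) : ℕ :=
  ((Finset.range m).filter fun t => π (epHist π ω₁ ω₂ t) ≠ EpAct.skip).card

/-- Utility of policy `π` on realized tapes: score `f` of the reward vector
minus `c_expl` per non-skip pull. -/
noncomputable def epUtil (m : ℕ) (f : (Fin m → Bool) → ℝ) (cExpl : ℝ)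
    (π : EpPolicy) (ω₁ ω₂ : ℕ → Bool) : ℝ :=
  f (fun i => (epHist π ω₁ ω₂ m).getD i false) - cExpl * epPulls m π ω₁ ω₂

/-- Expected utility `V(π)`: expectation over the two independent i.i.d.
Bernoulli reward tapes. -/
noncomputable def epValue (m : ℕ) (f : (Fin m → Bool) → ℝ) (cExpl μ₁ μ₂ : ℝ)
    (h₁ : ENNReal.ofReal μ₁ ≤ 1) (h₂ : ENNReal.ofReal μ₂ ≤ 1)
    (π : EpPolicy) : ℝ :=
  ∫ ω : (Fin m → Bool) × (Fin m → Bool),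
      epUtil m f cExpl π
        (fun t => if h : t < m then ω.1 ⟨t, h⟩ else false)
        (fun t => if h : t < m then ω.2 ⟨t, h⟩ else false)
    ∂((Measure.pi fun _ : Fin m => (PMF.bernoulli (Real.toNNReal μ₁) (ENNReal.coe_le_one_iff.mp h₁)).toMeasure).prod
        (Measure.pi fun _ : Fin m => (PMF.bernoulli (Real.toNNReal μ₂) (ENNReal.coe_le_one_iff.mp h₂)).toMeasure))

/-!
Couple the arms coordinatewise by the monotone coupling of Bernoulli(μ₁) and Bernoulli(μ₂):
the reward vectors then satisfy `x ≤ y`, and `x = 0`, `y = 1` with probability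
`(μ₂ - μ₁)^m ≥ c^m ≥ c^(2m)`, so monotonicity of `f` gives `E f(y) - E f(x) ≥ c'`.
A policy that never pulls arm 2 collects rewards pointwise below the arm-1 tape and pays a
nonnegative cost, so its value is at most `E f(x)`; always pulling arm 2 scores `E f(y)`
at cost `cExpl * m ≤ c' / 2`.
-/

section BernoulliCoupling

variable {ι : Type*} [Fintype ι] [DecidableEq ι]

def bernoulliWeight (p : ℝ) (b : Bool) : ℝ := cond b p (1 - p)

def bernoulliExpectation (p : ℝ) (g : (ι → Bool) → ℝ) : ℝ :=
  ∑ x, (∏ i, bernoulliWeight p (x i)) * g x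

/-- The law of `(U < p, U < q)` for `U` uniform on `[0, 1]`. -/
def monoCoupling (p q : ℝ) : Bool → Bool → ℝ
  | false, false => 1 - q
  | false, true => q - p
  | true, false => 0
  | true, true => p

variable {p q : ℝ}

theorem monoCoupling_nonneg (hp : 0 ≤ p) (hpq : p ≤ q) (hq : q ≤ 1) (a b : Bool) :
    0 ≤ monoCoupling p q a b := by
  cases a <;> cases b <;> simp only [monoCoupling] <;> linarith

theorem le_of_monoCoupling_ne_zero {a b : Bool} (h : monoCoupling p q a b ≠ 0) : a ≤ b := by
  cases a <;> cases b <;> simp_all [monoCoupling]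

theorem sum_monoCoupling_right (a : Bool) : ∑ b, monoCoupling p q a b = bernoulliWeight p a := by
  cases a <;> simp [monoCoupling, bernoulliWeight]

theorem sum_monoCoupling_left (b : Bool) : ∑ a, monoCoupling p q a b = bernoulliWeight q b := by
  cases b <;> simp [monoCoupling, bernoulliWeight]

theorem bernoulliExpectation_sub_eq_sum_coupling (g : (ι → Bool) → ℝ) :
    bernoulliExpectation q g - bernoulliExpectation p g
      = ∑ z : (ι → Bool) × (ι → Bool),
          (∏ i, monoCoupling p q (z.1 i) (z.2 i)) * (g z.2 - g z.1) := by
  have marginal_fst (x : ι → Bool) :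
      ∑ y : ι → Bool, ∏ i, monoCoupling p q (x i) (y i) = ∏ i, bernoulliWeight p (x i) := by
    simp_rw [← Fintype.prod_sum (fun i b => monoCoupling p q (x i) b), sum_monoCoupling_right]
  have marginal_snd (y : ι → Bool) :
      ∑ x : ι → Bool, ∏ i, monoCoupling p q (x i) (y i) = ∏ i, bernoulliWeight q (y i) := by
    simp_rw [← Fintype.prod_sum (fun i a => monoCoupling p q a (y i)), sum_monoCoupling_left]
  simp_rw [bernoulliExpectation, mul_sub, Finset.sum_sub_distrib, Fintype.sum_prod_type,
    ← Finset.sum_mul, marginal_fst]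
  conv_rhs => rw [Finset.sum_comm]
  simp_rw [← Finset.sum_mul, marginal_snd]

theorem pow_mul_le_bernoulliExpectation_sub (hp : 0 ≤ p) (hpq : p ≤ q) (hq : q ≤ 1)
    {f : (ι → Bool) → ℝ} (hf : Monotone f) :
    (q - p) ^ Fintype.card ι * (f (fun _ => true) - f (fun _ => false))
      ≤ bernoulliExpectation q f - bernoulliExpectation p f := by
  have hterm (z : (ι → Bool) × (ι → Bool)) :
      0 ≤ (∏ i, monoCoupling p q (z.1 i) (z.2 i)) * (f z.2 - f z.1) := by
    by_cases hz : ∏ i, monoCoupling p q (z.1 i) (z.2 i) = 0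
    · simp [hz]
    · have hle : z.1 ≤ z.2 := fun i =>
        le_of_monoCoupling_ne_zero (Finset.prod_ne_zero_iff.mp hz i (Finset.mem_univ i))
      exact mul_nonneg (Finset.prod_nonneg fun i _ => monoCoupling_nonneg hp hpq hq _ _)
        (sub_nonneg.mpr (hf hle))
  rw [bernoulliExpectation_sub_eq_sum_coupling]
  refine le_of_eq_of_le ?_
    (Finset.single_le_sum (fun z _ => hterm z) (Finset.mem_univ (fun _ => false, fun _ => true)))
  simp [monoCoupling]

theorem integral_pi_toMeasure_eq_sum {α : Type*} [Fintype α] [MeasurableSpace α]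
    [MeasurableSingletonClass α] (P : ι → PMF α) (g : (ι → α) → ℝ) :
    ∫ x, g x ∂Measure.pi (fun i => (P i).toMeasure) = ∑ x, (∏ i, (P i (x i)).toReal) * g x := by
  rw [integral_fintype .of_finite]
  refine Finset.sum_congr rfl fun x _ => ?_
  rw [measureReal_def, Measure.pi_singleton, ENNReal.toReal_prod, smul_eq_mul]
  simp_rw [PMF.toMeasure_apply_singleton _ _ (measurableSet_singleton _)]

set_option linter.deprecated false in
theorem integral_pi_bernoulli (hp : 0 ≤ p) (h : p.toNNReal ≤ 1) (g : (ι → Bool) → ℝ) :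
    ∫ x, g x ∂Measure.pi (fun _ : ι => (PMF.bernoulli p.toNNReal h).toMeasure)
      = bernoulliExpectation p g := by
  have hp1 : p ≤ 1 := Real.toNNReal_le_one.mp h
  rw [integral_pi_toMeasure_eq_sum]
  refine Finset.sum_congr rfl fun x _ => ?_
  congr 1
  refine Finset.prod_congr rfl fun i _ => ?_
  cases x i <;> simp [PMF.bernoulli_apply, bernoulliWeight, hp, hp1, ENNReal.toReal_sub_of_le]

end BernoulliCoupling

section Episode

def EpAct.reward : EpAct → Bool → Bool → Bool
  | .arm1, b₁, _ => b₁
  | .arm2, _, b₂ => b₂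
  | .skip, _, _ => false

theorem EpAct.reward_le_of_ne_arm2 {a : EpAct} (ha : a ≠ .arm2) (b₁ b₂ : Bool) :
    a.reward b₁ b₂ ≤ b₁ := by
  cases a
  · exact le_rfl
  · exact absurd rfl ha
  · exact Bool.false_le b₁

variable {π : EpPolicy} {ω₁ ω₂ : ℕ → Bool}

theorem epHist_length (t : ℕ) : (epHist π ω₁ ω₂ t).length = t := by
  induction t with
  | zero => rfl
  | succ t ih => simp [epHist, ih]

theorem epHist_getD {i t : ℕ} (hi : i < t) :
    (epHist π ω₁ ω₂ t).getD i false = (π (epHist π ω₁ ω₂ i)).reward (ω₁ i) (ω₂ i) := by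
  induction t with
  | zero => omega
  | succ t ih =>
    rcases Nat.lt_succ_iff_lt_or_eq.mp hi with hi | rfl
    · rw [epHist, List.getD_append _ _ _ _ (by rwa [epHist_length]), ih hi]
    · rw [epHist, List.getD_append_right _ _ _ _ (epHist_length i).le, epHist_length,
        Nat.sub_self]
      cases π (epHist π ω₁ ω₂ i) <;> rfl

theorem epUtil_arm2 (m : ℕ) (f : (Fin m → Bool) → ℝ) (cExpl : ℝ) :
    epUtil m f cExpl (fun _ => .arm2) ω₁ ω₂ = f (fun i : Fin m => ω₂ i) - cExpl * m := by
  have hrewards : (fun i : Fin m => (epHist (fun _ => .arm2) ω₁ ω₂ m).getD i false)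
      = fun i : Fin m => ω₂ i := funext fun i => epHist_getD i.isLt
  rw [epUtil, hrewards]
  simp [epPulls]

theorem epUtil_le_of_ne_arm2 (hπ : ∀ l, π l ≠ .arm2) {m : ℕ} {f : (Fin m → Bool) → ℝ}
    (hf : Monotone f) {cExpl : ℝ} (hc : 0 ≤ cExpl) :
    epUtil m f cExpl π ω₁ ω₂ ≤ f (fun i : Fin m => ω₁ i) := by
  have hrewards : (fun i : Fin m => (epHist π ω₁ ω₂ m).getD i false) ≤ fun i : Fin m => ω₁ i :=
    fun i => (epHist_getD i.isLt).trans_le (EpAct.reward_le_of_ne_arm2 (hπ _) _ _)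
  have := hf hrewards
  unfold epUtil
  nlinarith [Nat.cast_nonneg (α := ℝ) (epPulls m π ω₁ ω₂)]

end Episode

section Value

variable {m : ℕ} {f : (Fin m → Bool) → ℝ} {cExpl μ₁ μ₂ : ℝ}
  {h₁ : ENNReal.ofReal μ₁ ≤ 1} {h₂ : ENNReal.ofReal μ₂ ≤ 1}

theorem epValue_arm2 (hμ₂ : 0 ≤ μ₂) :
    epValue m f cExpl μ₁ μ₂ h₁ h₂ (fun _ => .arm2) = bernoulliExpectation μ₂ f - cExpl * m := by
  simp only [epValue, epUtil_arm2, Fin.is_lt, dite_true, Fin.eta]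
  rw [integral_sub .of_finite .of_finite, integral_const, integral_fun_snd,
    integral_pi_bernoulli hμ₂]
  simp

theorem epValue_le_of_ne_arm2 (hμ₁ : 0 ≤ μ₁) (hf : Monotone f) (hc : 0 ≤ cExpl)
    {π : EpPolicy} (hπ : ∀ l, π l ≠ .arm2) :
    epValue m f cExpl μ₁ μ₂ h₁ h₂ π ≤ bernoulliExpectation μ₁ f := by
  calc epValue m f cExpl μ₁ μ₂ h₁ h₂ π
      ≤ ∫ ω : (Fin m → Bool) × (Fin m → Bool), f ω.1 ∂_ :=
        integral_mono .of_finite .of_finite fun ω =>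
          (epUtil_le_of_ne_arm2 hπ hf hc).trans_eq (by simp)
    _ = bernoulliExpectation μ₁ f := by
      rw [integral_fun_fst, integral_pi_bernoulli hμ₁]
      simp

end Value

theorem pow_two_mul_le_pow {c d : ℝ} {m : ℕ} (hc₀ : 0 ≤ c) (hc₁ : c ≤ 1) (hcd : c ≤ d) :
    c ^ (2 * m) ≤ d ^ m := calc
  c ^ (2 * m) ≤ c ^ m := pow_le_pow_of_le_one hc₀ hc₁ (by omega)
  _ ≤ d ^ m := pow_le_pow_left₀ hc₀ hcd m

theorem mul_natCast_le_half_of_le_div {a b : ℝ} {m : ℕ} (hb : 0 ≤ b) (h : a ≤ b / (2 * m)) :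
    a * m ≤ b / 2 := by
  rcases Nat.eq_zero_or_pos m with rfl | _
  · simpa using div_nonneg hb zero_le_two
  · calc a * m ≤ b / (2 * m) * m := by gcongr
      _ = b / 2 := by field_simp

theorem stmt_18_general (m : ℕ) (c cExpl μ₁ μ₂ : ℝ)
    (hc : c ∈ Set.Ioo (0 : ℝ) (1 / 2)) (hcE : cExpl ∈ Set.Ioc (0 : ℝ) 1)
    (hμ₁ : μ₁ ∈ Set.Ioo c (1 - c))
    (hgap : μ₂ ≥ μ₁ + c)
    (h₁ : ENNReal.ofReal μ₁ ≤ 1) (h₂ : ENNReal.ofReal μ₂ ≤ 1)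
    (f : (Fin m → Bool) → ℝ) (hmono : Monotone f)
    (c' : ℝ) (hc' : c' = c ^ (2 * m) * (f (fun _ => true) - f (fun _ => false)))
    (hsmall : cExpl ≤ c' / (2 * m)) :
    epValue m f cExpl μ₁ μ₂ h₁ h₂ (fun _ => EpAct.arm2)
      - (⨆ π : {π : EpPolicy // ∀ l, π l ≠ EpAct.arm2},
          epValue m f cExpl μ₁ μ₂ h₁ h₂ π.val)
      ≥ c' / 2 := by
  obtain ⟨hc₀, hc₁⟩ := hc
  have hμ₁₀ : 0 ≤ μ₁ := hc₀.le.trans hμ₁.1.le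
  have hΔ : 0 ≤ f (fun _ => true) - f (fun _ => false) := sub_nonneg.mpr (hmono fun _ => le_top)
  have hexpect : c' ≤ bernoulliExpectation μ₂ f - bernoulliExpectation μ₁ f := calc
    c' ≤ (μ₂ - μ₁) ^ Fintype.card (Fin m) * (f (fun _ => true) - f (fun _ => false)) := by
      rw [hc', Fintype.card_fin]
      exact mul_le_mul_of_nonneg_right
        (pow_two_mul_le_pow hc₀.le (by linarith) (by linarith)) hΔ
    _ ≤ _ := pow_mul_le_bernoulliExpectation_sub hμ₁₀ (by linarith)
      (ENNReal.ofReal_le_one.mp h₂) hmono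
  have hcost : cExpl * m ≤ c' / 2 :=
    mul_natCast_le_half_of_le_div (hc' ▸ mul_nonneg (pow_nonneg hc₀.le _) hΔ) hsmall
  have : Nonempty {π : EpPolicy // ∀ l, π l ≠ EpAct.arm2} := ⟨⟨fun _ => .skip, fun _ => nofun⟩⟩
  have hsup := ciSup_le fun π : {π : EpPolicy // ∀ l, π l ≠ EpAct.arm2} =>
    epValue_le_of_ne_arm2 (μ₂ := μ₂) (h₁ := h₁) (h₂ := h₂) hμ₁₀ hmono hcE.1.le π.2
  rw [epValue_arm2 (by linarith)]
  linarith

theorem stmt_18 (m : ℕ) (hm : 1 ≤ m) (c cExpl μ₁ μ₂ : ℝ)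
    (hc : c ∈ Set.Ioo (0 : ℝ) (1 / 2)) (hcE : cExpl ∈ Set.Ioc (0 : ℝ) 1)
    (hμ₁ : μ₁ ∈ Set.Ioo c (1 - c)) (hμ₂ : μ₂ ∈ Set.Ioo c (1 - c))
    (hgap : μ₂ ≥ μ₁ + c)
    (h₁ : ENNReal.ofReal μ₁ ≤ 1) (h₂ : ENNReal.ofReal μ₂ ≤ 1)
    (f : (Fin m → Bool) → ℝ) (hmono : Monotone f)
    (hrange : ∀ x, f x ∈ Set.Icc (0 : ℝ) m)
    (hbot : f (fun _ => false) = 0) (htop : 0 < f (fun _ => true))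
    (c' : ℝ) (hc' : c' = c ^ (2 * m) * (f (fun _ => true) - f (fun _ => false)))
    (hsmall : cExpl ≤ c' / (2 * m)) :
    epValue m f cExpl μ₁ μ₂ h₁ h₂ (fun _ => EpAct.arm2)
      - (⨆ π : {π : EpPolicy // ∀ l, π l ≠ EpAct.arm2},
          epValue m f cExpl μ₁ μ₂ h₁ h₂ π.val)
      ≥ c' / 2 :=
  stmt_18_general m c cExpl μ₁ μ₂ hc hcE hμ₁ hgap h₁ h₂ f hmono c' hc' hsmall
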